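/- Let f = ∇φ : ℝ² → ℝ² be a generic proper gradient map whose zero set is a single point p. If p is a source then f is proper gradient homotopic to id_{ℝ²}; if p is a sink then f is proper gradient homotopic to −id_{ℝ²}. -/

import Mathlib

open Set Metric Filter

noncomputable section

/-- Euclidean space `ℝⁿ`. -/
abbrev Euc (n : ℕ) := EuclideanSpace ℝ (Fin n)

/-- A map `f : ℝⁿ → ℝⁿ` is gradient if it is the gradient of a `C¹` function `φ : ℝⁿ → ℝ`. -/
def IsGradient {n : ℕ} (f : Euc n → Euc n) : Prop :=
  ∃ φ : Euc n → ℝ, ContDiff ℝ 1 φ ∧ ∀ x, gradient φ x = f x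

/-- A map is proper if preimages of compact sets are compact (our maps are continuous anyway). -/
def IsProper {n : ℕ} (f : Euc n → Euc n) : Prop :=
  ∀ K : Set (Euc n), IsCompact K → IsCompact (f ⁻¹' K)

/-- `h : [0,1] × ℝⁿ → ℝⁿ` is a gradient homotopy: it is continuous, each `h t` is a
gradient map, and the zero set `h⁻¹(0)` (within `[0,1] × ℝⁿ`) is compact. -/
def IsGradientHomotopy {n : ℕ} (h : ℝ → Euc n → Euc n) : Prop :=
  ContinuousOn (fun p : ℝ × Euc n => h p.1 p.2) (Icc 0 1 ×ˢ univ) ∧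
  (∀ t ∈ Icc (0:ℝ) 1, IsGradient (h t)) ∧
  IsCompact {p : ℝ × Euc n | p.1 ∈ Icc (0:ℝ) 1 ∧ h p.1 p.2 = 0}

/-- Two maps are gradient homotopic if some gradient homotopy connects them. -/
def GradientHomotopic {n : ℕ} (f g : Euc n → Euc n) : Prop :=
  ∃ h : ℝ → Euc n → Euc n, IsGradientHomotopy h ∧ h 0 = f ∧ h 1 = g

/-- `h : [0,1] × ℝⁿ → ℝⁿ` is a proper gradient homotopy: it is continuous, each `h t` is a
gradient map, and `h` is proper as a map on `[0,1] × ℝⁿ`. -/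
def IsProperGradientHomotopy {n : ℕ} (h : ℝ → Euc n → Euc n) : Prop :=
  ContinuousOn (fun p : ℝ × Euc n => h p.1 p.2) (Icc 0 1 ×ˢ univ) ∧
  (∀ t ∈ Icc (0:ℝ) 1, IsGradient (h t)) ∧
  (∀ K : Set (Euc n), IsCompact K →
    IsCompact {p : ℝ × Euc n | p.1 ∈ Icc (0:ℝ) 1 ∧ h p.1 p.2 ∈ K})

/-- Two maps are proper gradient homotopic if some proper gradient homotopy connects them. -/
def ProperGradientHomotopic {n : ℕ} (f g : Euc n → Euc n) : Prop :=
  ∃ h : ℝ → Euc n → Euc n, IsProperGradientHomotopy h ∧ h 0 = f ∧ h 1 = g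

open scoped RealInnerProductSpace

/-- `p` is a source of the gradient map `f = ∇φ`: a zero of `f` at which the Hessian of `φ`,
i.e. the derivative of `f`, is positive definite. -/
def IsSourceAt (f : Euc 2 → Euc 2) (p : Euc 2) : Prop :=
  f p = 0 ∧ ∀ v : Euc 2, v ≠ 0 → 0 < ⟪fderiv ℝ f p v, v⟫

/-- `p` is a sink of the gradient map `f = ∇φ`: a zero of `f` at which the Hessian of `φ`
is negative definite. -/
def IsSinkAt (f : Euc 2 → Euc 2) (p : Euc 2) : Prop :=
  f p = 0 ∧ ∀ v : Euc 2, v ≠ 0 → ⟪fderiv ℝ f p v, v⟫ < 0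

/-- `p` is a saddle of `f`: a zero of `f` which is neither a source nor a sink. -/
def IsSaddleAt (f : Euc 2 → Euc 2) (p : Euc 2) : Prop :=
  f p = 0 ∧ ¬ IsSourceAt f p ∧ ¬ IsSinkAt f p

/-- `γ : ℝ → ℝ²` is a (full) trajectory of the local flow of `ẋ = f(x)`. -/
def IsTrajectory (f : Euc 2 → Euc 2) (γ : ℝ → Euc 2) : Prop :=
  ∀ t : ℝ, HasDerivAt γ (f (γ t)) t

/-- No trajectory of the local flow of `ẋ = f(x)` connects two (distinct) saddle points. -/
def NoSaddleConnection (f : Euc 2 → Euc 2) : Prop :=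
  ¬ ∃ (γ : ℝ → Euc 2) (p q : Euc 2), IsTrajectory f γ ∧
      IsSaddleAt f p ∧ IsSaddleAt f q ∧ p ≠ q ∧
      Filter.Tendsto γ Filter.atBot (nhds p) ∧ Filter.Tendsto γ Filter.atTop (nhds q)

/-- `f` is a generic gradient map with potential `φ`: `φ` is `C²` with `∇φ = f`, all critical
points are nondegenerate, distinct critical points have distinct critical values, and no
trajectory of the local flow connects two saddle points. -/
def IsGenericGradientPair (φ : Euc 2 → ℝ) (f : Euc 2 → Euc 2) : Prop :=
  ContDiff ℝ 2 φ ∧ (∀ x, gradient φ x = f x) ∧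
  (∀ p : Euc 2, f p = 0 → Function.Bijective (fderiv ℝ f p)) ∧
  (∀ p q : Euc 2, f p = 0 → f q = 0 → φ p = φ q → p = q) ∧
  NoSaddleConnection f

/-- `f` is a generic gradient map. -/
def IsGenericGradient (f : Euc 2 → Euc 2) : Prop :=
  ∃ φ : Euc 2 → ℝ, IsGenericGradientPair φ f

/-- The set `A_f` of sources and sinks of `f`. -/
def sourceSinkSet (f : Euc 2 → Euc 2) : Set (Euc 2) :=
  {p | IsSourceAt f p ∨ IsSinkAt f p}

/-- The set `B_f` of saddles of `f`. -/
def saddleSet (f : Euc 2 → Euc 2) : Set (Euc 2) :=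
  {p | IsSaddleAt f p}

/-- `z ∈ E_x⁻`: the trajectory through `z` tends to `x` as `t → -∞`. -/
def InBackwardBasin (f : Euc 2 → Euc 2) (x z : Euc 2) : Prop :=
  ∃ γ : ℝ → Euc 2, γ 0 = z ∧ (∀ t ∈ Set.Iic (0:ℝ), HasDerivAt γ (f (γ t)) t) ∧
    Filter.Tendsto γ Filter.atBot (nhds x)

/-- `z ∈ E_y⁺` for a stationary point `y`: the trajectory through `z` tends to `y` in
forward time.  (A forward trajectory converging to a stationary point exists for all
`t ≥ 0`.) -/
def InForwardBasin (f : Euc 2 → Euc 2) (y z : Euc 2) : Prop :=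
  ∃ γ : ℝ → Euc 2, γ 0 = z ∧ (∀ t ∈ Set.Ici (0:ℝ), HasDerivAt γ (f (γ t)) t) ∧
    Filter.Tendsto γ Filter.atTop (nhds y)

/-- `z ∈ E_∞⁺`: the trajectory through `z` escapes to infinity as `t → ω_z`, where
`ω_z ∈ (0, ∞]` is the endpoint of the maximal forward interval of existence. -/
def EscapesToInfinity (f : Euc 2 → Euc 2) (z : Euc 2) : Prop :=
  ∃ γ : ℝ → Euc 2, γ 0 = z ∧
    (((∀ t ∈ Set.Ici (0:ℝ), HasDerivAt γ (f (γ t)) t) ∧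
        Filter.Tendsto (fun t => ‖γ t‖) Filter.atTop Filter.atTop) ∨
      (∃ ω : ℝ, 0 < ω ∧ (∀ t ∈ Set.Ico (0:ℝ) ω, HasDerivAt γ (f (γ t)) t) ∧
        Filter.Tendsto (fun t => ‖γ t‖) (nhdsWithin ω (Set.Iio ω)) Filter.atTop))

/-- The set of asymptotic backward directions `V_x^P ⊆ S¹`: unit vectors
`v_z = lim_{t → -∞} f(η^t z)/|f(η^t z)|` over points `z ∈ E_x⁻` satisfying `P`
(membership in `E_y⁺` or `E_∞⁺`). -/
def dirSet (f : Euc 2 → Euc 2) (x : Euc 2) (P : Euc 2 → Prop) : Set (Euc 2) :=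
  {v | ∃ (z : Euc 2) (γ : ℝ → Euc 2), γ 0 = z ∧
    (∀ t ∈ Set.Iic (0:ℝ), HasDerivAt γ (f (γ t)) t) ∧
    Filter.Tendsto γ Filter.atBot (nhds x) ∧ P z ∧
    Filter.Tendsto (fun t => (‖f (γ t)‖)⁻¹ • f (γ t)) Filter.atBot (nhds v)}

/-- `V_x^y` for a stationary point `y`. -/
def dirSetTo (f : Euc 2 → Euc 2) (x y : Euc 2) : Set (Euc 2) :=
  dirSet f x (InForwardBasin f y)

/-- `V_x^∞`. -/
def dirSetInf (f : Euc 2 → Euc 2) (x : Euc 2) : Set (Euc 2) :=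
  dirSet f x (EscapesToInfinity f)


/-!
The rescalings `s⁻¹ • f (p + s • (x - p))`, `0 < s ≤ 1`, are gradients (of
`s⁻² φ (p + s • (x - p))`) and tend, as `s → 0`, to the linearisation `A (x - p)` of `f` at its
zero, where `A = D f (p)` is the Hessian of `φ`, a symmetric map. The family stays proper:
since `p` is the only zero of the proper map `f` and `A` is injective, `‖y - p‖` is bounded by
a multiple of `‖f y‖` on each sublevel set of `‖f‖`, and this bound is invariant under the
rescaling. At a source `A` is positive definite, so the maps
`((1 - t) • A + t • id) (x - (1 - t) • p)` are gradients of uniformly coercive quadratic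
functions, and join `A (x - p)` properly to the identity. A sink of `f` is a source of
`-f = ∇ (-φ)`, and negating that homotopy gives the second claim.
-/

open InnerProductSpace Topology Asymptotics
open scoped Gradient

section GradientCalculus

variable {E : Type*} [NormedAddCommGroup E] [InnerProductSpace ℝ E] [CompleteSpace E]

/-- Over `ℝ` the conjugate-linear Riesz map `toDual` is linear, hence a continuous linear
equivalence. -/
theorem gradient_eq_comp_fderiv (φ : E → ℝ) :
    ∇ φ = (toDual ℝ E).symm.toContinuousLinearEquiv ∘ fderiv ℝ φ :=
  rfl

theorem gradient_neg (φ : E → ℝ) : ∇ (-φ) = -∇ φ := by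
  ext1 x
  simp [gradient, fderiv_neg]

theorem contDiff_gradient {k : ℕ} {φ : E → ℝ} (hφ : ContDiff ℝ (k + 1) φ) :
    ContDiff ℝ k (∇ φ) := by
  rw [gradient_eq_comp_fderiv]
  exact (ContinuousLinearEquiv.contDiff _).comp (hφ.fderiv_right le_rfl)

theorem isSymmetric_fderiv_gradient {φ : E → ℝ} (hφ : ContDiff ℝ 2 φ) (p : E) :
    (fderiv ℝ (∇ φ) p : E →ₗ[ℝ] E).IsSymmetric := by
  have hφ' : ContDiff ℝ 1 (fderiv ℝ φ) := hφ.fderiv_right (by norm_num)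
  have hinner : ∀ u v, ⟪fderiv ℝ (∇ φ) p u, v⟫ = fderiv ℝ (fderiv ℝ φ) p u v := by
    intro u v
    rw [gradient_eq_comp_fderiv, ContinuousLinearEquiv.comp_fderiv]
    exact toDual_symm_apply
  intro u v
  rw [ContinuousLinearMap.coe_coe, real_inner_comm _ u, hinner, hinner]
  exact second_derivative_symmetric
    (fun y => ((hφ.differentiable (by norm_num)) y).hasFDerivAt)
    ((hφ'.differentiable one_ne_zero) p).hasFDerivAt u v

end GradientCalculus

section GradientMaps

variable {n : ℕ}

theorem isGradient_of_hasGradientAt {φ : Euc n → ℝ} {f : Euc n → Euc n} (hφ : ContDiff ℝ 1 φ)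
    (hf : ∀ x, HasGradientAt φ (f x) x) : IsGradient f :=
  ⟨φ, hφ, fun x => (hf x).gradient⟩

theorem IsGradient.neg {f : Euc n → Euc n} (hf : IsGradient f) : IsGradient (-f) := by
  obtain ⟨φ, hφ, hgrad⟩ := hf
  exact ⟨-φ, hφ.neg, fun x => by rw [gradient_neg, Pi.neg_apply, hgrad, Pi.neg_apply]⟩

theorem isGradient_comp_sub {B : Euc n →L[ℝ] Euc n} (hB : (B : Euc n →ₗ[ℝ] Euc n).IsSymmetric)
    (q : Euc n) : IsGradient (fun x => B (x - q)) := by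
  refine isGradient_of_hasGradientAt (φ := fun y => (1 / 2 : ℝ) * ⟪B (y - q), y - q⟫)
    (contDiff_const.mul ((B.contDiff.comp (by fun_prop)).inner ℝ (by fun_prop))) fun x => ?_
  rw [hasGradientAt_iff_hasFDerivAt]
  have hsub : HasFDerivAt (fun y : Euc n => y - q) (ContinuousLinearMap.id ℝ (Euc n)) x :=
    (hasFDerivAt_id x).sub_const q
  refine (((B.hasFDerivAt.comp x hsub).inner ℝ hsub).const_mul (1 / 2 : ℝ)).congr_fderiv ?_
  ext v
  have hB' : ∀ u w, ⟪B u, w⟫ = ⟪u, B w⟫ := hB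
  simp only [smul_apply, ContinuousLinearMap.comp_apply,
    ContinuousLinearMap.prod_apply, ContinuousLinearMap.coe_id', id_eq, Function.comp_apply,
    fderivInnerCLM_apply, toDual_apply_apply, smul_eq_mul]
  rw [hB' v, real_inner_comm (B (x - q)) v]
  ring

/-- At `s = 0` both the map and the potential vanish, by `0⁻¹ = 0`. -/
theorem isGradient_inv_smul_gradient_comp {φ : Euc n → ℝ} (hφ : ContDiff ℝ 1 φ) (p : Euc n)
    (s : ℝ) : IsGradient (fun x => s⁻¹ • ∇ φ (p + s • (x - p))) := by
  refine isGradient_of_hasGradientAt (φ := fun x => (s⁻¹ * s⁻¹) * φ (p + s • (x - p)))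
    (by fun_prop) fun x => ?_
  rw [hasGradientAt_iff_hasFDerivAt]
  have hhom :
      HasFDerivAt (fun y : Euc n => p + s • (y - p)) (s • ContinuousLinearMap.id ℝ _) x :=
    (((hasFDerivAt_id x).sub_const p).const_smul s).const_add p
  have hφx := ((hφ.differentiable one_ne_zero) (p + s • (x - p))).hasGradientAt
  refine ((hφx.hasFDerivAt.comp x hhom).const_mul (s⁻¹ * s⁻¹)).congr_fderiv ?_
  ext v
  have hs : s⁻¹ * s⁻¹ * s = s⁻¹ := by
    rcases eq_or_ne s 0 with rfl | hs
    · simp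
    · field_simp
  simp only [smul_apply, ContinuousLinearMap.comp_apply,
    ContinuousLinearMap.id_apply, toDual_apply_apply, smul_eq_mul]
  rw [real_inner_smul_left, real_inner_smul_right, ← mul_assoc, hs]

end GradientMaps

section Coercive

variable {E : Type*} [NormedAddCommGroup E] [InnerProductSpace ℝ E]

theorem exists_pos_mul_sq_norm_le_inner [FiniteDimensional ℝ E] {A : E →L[ℝ] E}
    (hA : ∀ v, v ≠ 0 → 0 < ⟪A v, v⟫) : ∃ c > 0, ∀ v, c * ‖v‖ ^ 2 ≤ ⟪A v, v⟫ := by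
  obtain ⟨c, hc, hsphere⟩ := (isCompact_sphere (0 : E) 1).exists_forall_le'
    (A.continuous.inner continuous_id').continuousOn
    fun w hw => hA w (ne_zero_of_mem_unit_sphere ⟨w, hw⟩)
  refine ⟨c, hc, fun v => ?_⟩
  rcases eq_or_ne v 0 with rfl | hv
  · simp
  have hnorm : ‖v‖ ≠ 0 := norm_ne_zero_iff.mpr hv
  have hw := hsphere (‖v‖⁻¹ • v) (by simp [norm_smul, hnorm])
  rw [map_smul, real_inner_smul_left, real_inner_smul_right] at hw
  calc c * ‖v‖ ^ 2 ≤ ‖v‖⁻¹ * (‖v‖⁻¹ * ⟪A v, v⟫) * ‖v‖ ^ 2 := by gcongr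
    _ = ⟪A v, v⟫ := by field_simp

theorem mul_norm_le_norm_of_mul_sq_norm_le_inner {A : E → E} {c : ℝ}
    (hA : ∀ v, c * ‖v‖ ^ 2 ≤ ⟪A v, v⟫) (v : E) : c * ‖v‖ ≤ ‖A v‖ := by
  rcases eq_or_ne v 0 with rfl | hv
  · simp
  have hpos : 0 < ‖v‖ := norm_pos_iff.mpr hv
  have := (hA v).trans (real_inner_le_norm (A v) v)
  nlinarith

end Coercive

section ProperBound

variable {E F : Type*} [NormedAddCommGroup E] [NormedSpace ℝ E]
  [NormedAddCommGroup F] [NormedSpace ℝ F]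

/-- Near `p` the bound comes from the injectivity of the derivative, away from `p` from the
compactness of the sublevel set, on which `f` does not vanish. -/
theorem exists_norm_sub_le_mul_norm {f : E → F} {A : E →L[ℝ] F} {p : E} {C M : ℝ}
    (hf : Continuous f) (hA : HasFDerivAt f A p) (hC : ∀ v, ‖v‖ ≤ C * ‖A v‖)
    (hzero : f ⁻¹' {0} = {p}) (hM : IsCompact (f ⁻¹' closedBall 0 M)) :
    ∃ K ≥ 0, ∀ y, ‖f y‖ ≤ M → ‖y - p‖ ≤ K * ‖f y‖ := by
  have hp : f p = 0 := by simpa using hzero.ge rfl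
  have hlin : (fun y => y - p) =O[𝓝 p] fun y => A (y - p) :=
    isBigO_iff.mpr ⟨C, Eventually.of_forall fun y => hC _⟩
  have hequiv : (fun y => f y - f p) ~[𝓝 p] fun y => A (y - p) :=
    hA.isLittleO.trans_isBigO hlin
  obtain ⟨C', hC'pos, hC'⟩ := (hlin.trans hequiv.isBigO_symm).exists_pos
  obtain ⟨δ, hδ, hnear⟩ := Metric.eventually_nhds_iff_ball.mp hC'.bound
  obtain ⟨m, hm, hfar⟩ := (hM.diff isOpen_ball).exists_forall_le' hf.norm.continuousOn
    (a := 0) fun y hy => norm_pos_iff.mpr fun hy0 => by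
      have : y ∈ f ⁻¹' {0} := hy0
      rw [hzero, mem_singleton_iff] at this
      subst this
      exact hy.2 (mem_ball_self hδ)
  obtain ⟨R, hR⟩ := hM.isBounded.subset_closedBall p
  refine ⟨max C' (R / m), le_max_of_le_left hC'pos.le, fun y hy => ?_⟩
  by_cases hyp : y ∈ ball p δ
  · calc ‖y - p‖ ≤ C' * ‖f y‖ := by simpa [hp] using hnear y hyp
      _ ≤ max C' (R / m) * ‖f y‖ := by gcongr; exact le_max_left _ _
  · have hyM : y ∈ f ⁻¹' closedBall 0 M := by simpa using hy
    have hyR : ‖y - p‖ ≤ R := by simpa [dist_eq_norm] using hR hyM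
    have hR0 : 0 ≤ R / m := div_nonneg ((norm_nonneg _).trans hyR) hm.le
    calc ‖y - p‖ ≤ R / m * m := by rwa [div_mul_cancel₀ _ hm.ne']
      _ ≤ R / m * ‖f y‖ := by gcongr; exact hfar y ⟨hyM, hyp⟩
      _ ≤ max C' (R / m) * ‖f y‖ := by gcongr; exact le_max_right _ _

end ProperBound

section BlowUp

variable {E F : Type*} [NormedAddCommGroup E] [NormedSpace ℝ E]
  [NormedAddCommGroup F] [NormedSpace ℝ F]

/-- The difference quotient `s⁻¹ • (f (p + s • (x - p)) - f p)` of `f` at `p`, written as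
`A (x - p)` plus a remainder so that the junk value `0⁻¹ = 0` makes it equal to `A (x - p)` at
`s = 0`. -/
def blowUp (f : E → F) (A : E →L[ℝ] F) (p : E) (s : ℝ) (x : E) : F :=
  A (x - p) + s⁻¹ • (f (p + s • (x - p)) - f p - A (s • (x - p)))

variable {f : E → F} {A : E →L[ℝ] F} {p : E}

@[simp]
theorem blowUp_zero : blowUp f A p 0 = fun x => A (x - p) := by
  ext x
  simp [blowUp]

theorem blowUp_of_ne_zero {s : ℝ} (hs : s ≠ 0) (x : E) :
    blowUp f A p s x = s⁻¹ • (f (p + s • (x - p)) - f p) := by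
  rw [blowUp, smul_sub _ (_ - _), map_smul, inv_smul_smul₀ hs]
  abel

theorem HasFDerivAt.tendsto_inv_smul_sub_sub (hA : HasFDerivAt f A p) (v₀ : E) :
    Tendsto (fun q : ℝ × E => q.1⁻¹ • (f (p + q.1 • q.2) - f p - A (q.1 • q.2)))
      (𝓝 (0, v₀)) (𝓝 0) := by
  have hp : Tendsto (fun q : ℝ × E => p + q.1 • q.2) (𝓝 (0, v₀)) (𝓝 p) := by
    have : Continuous fun q : ℝ × E => p + q.1 • q.2 := by fun_prop
    simpa using this.tendsto (0, v₀)
  have hrem := hA.isLittleO.comp_tendsto hp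
  simp only [Function.comp_def, add_sub_cancel_left] at hrem
  have hbdd : (fun q : ℝ × E => q.1⁻¹ • q.1 • q.2) =O[𝓝 (0, v₀)] fun _ => (1 : ℝ) := by
    refine (isBigO_of_le _ fun q => ?_).trans
      ((continuous_snd.tendsto (0, v₀)).isBigO_one ℝ)
    rcases eq_or_ne q.1 0 with hq | hq <;> simp [hq]
  exact (isLittleO_one_iff ℝ).mp
    (((isBigO_refl _ _).smul_isLittleO hrem).trans_isBigO hbdd)

theorem continuous_blowUp (hf : Continuous f) (hA : HasFDerivAt f A p) :
    Continuous fun q : ℝ × E => blowUp f A p q.1 q.2 := by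
  refine continuous_iff_continuousAt.mpr fun ⟨s, x⟩ => ?_
  rcases eq_or_ne s 0 with rfl | hs
  · have hshift : Continuous fun q : ℝ × E => (q.1, q.2 - p) := by fun_prop
    have hrem := (hA.tendsto_inv_smul_sub_sub (x - p)).comp (hshift.tendsto ((0 : ℝ), x))
    have hlin : Continuous fun q : ℝ × E => A (q.2 - p) := by fun_prop
    simpa [ContinuousAt, blowUp] using (hlin.tendsto ((0 : ℝ), x)).add hrem
  · unfold blowUp
    fun_prop (disch := exact hs)

theorem norm_sub_le_of_norm_blowUp_le {K C M s : ℝ} {x : E} (hp : f p = 0)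
    (hK : ∀ y, ‖f y‖ ≤ M → ‖y - p‖ ≤ K * ‖f y‖) (hK0 : 0 ≤ K)
    (hC : ∀ v, ‖v‖ ≤ C * ‖A v‖) (hs : s ∈ Icc (0 : ℝ) 1) (hx : ‖blowUp f A p s x‖ ≤ M) :
    ‖x - p‖ ≤ max K C * M := by
  have hM : 0 ≤ M := (norm_nonneg _).trans hx
  rcases hs.1.eq_or_lt with rfl | hspos
  · rw [blowUp_zero] at hx
    calc ‖x - p‖ ≤ C * ‖A (x - p)‖ := hC _
      _ ≤ max K C * M := by gcongr; exact le_max_right _ _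
  · set y := p + s • (x - p)
    rw [blowUp_of_ne_zero hspos.ne', hp, sub_zero, norm_smul, Real.norm_eq_abs, abs_inv,
      abs_of_pos hspos, inv_mul_le_iff₀ hspos] at hx
    have hy : ‖y - p‖ = s * ‖x - p‖ := by
      simp [y, norm_smul, abs_of_pos hspos]
    have hsx : s * ‖x - p‖ ≤ s * (max K C * M) :=
      calc s * ‖x - p‖ = ‖y - p‖ := hy.symm
        _ ≤ K * ‖f y‖ := hK y (hx.trans (mul_le_of_le_one_left hM hs.2))
        _ ≤ max K C * (s * M) := by gcongr; exact le_max_left _ _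
        _ = s * (max K C * M) := by ring
    exact le_of_mul_le_mul_left hsx hspos

end BlowUp

section ProperGradientHomotopies

variable {n : ℕ}

theorem isClosed_setOf_mem_Icc_and_mem {h : ℝ → Euc n → Euc n}
    (hcont : ContinuousOn (fun q : ℝ × Euc n => h q.1 q.2) (Icc 0 1 ×ˢ univ))
    {K : Set (Euc n)} (hK : IsClosed K) :
    IsClosed {q : ℝ × Euc n | q.1 ∈ Icc (0 : ℝ) 1 ∧ h q.1 q.2 ∈ K} := by
  convert hcont.preimage_isClosed_of_isClosed (isClosed_Icc.prod isClosed_univ) hK using 1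
  ext q
  simp

theorem isProperGradientHomotopy_of_bound {h : ℝ → Euc n → Euc n}
    (hcont : ContinuousOn (fun q : ℝ × Euc n => h q.1 q.2) (Icc 0 1 ×ˢ univ))
    (hgrad : ∀ t ∈ Icc (0 : ℝ) 1, IsGradient (h t))
    (hbound : ∀ M, ∃ R, ∀ t ∈ Icc (0 : ℝ) 1, ∀ x, ‖h t x‖ ≤ M → ‖x‖ ≤ R) :
    IsProperGradientHomotopy h := by
  refine ⟨hcont, hgrad, fun K hK => ?_⟩
  obtain ⟨M, hM⟩ := hK.isBounded.subset_closedBall 0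
  obtain ⟨R, hR⟩ := hbound M
  refine (isCompact_Icc.prod (isCompact_closedBall 0 R)).of_isClosed_subset
    (isClosed_setOf_mem_Icc_and_mem hcont hK.isClosed) fun q hq => ⟨hq.1, ?_⟩
  simpa using hR q.1 hq.1 q.2 (by simpa using hM hq.2)

theorem ProperGradientHomotopic.neg {f g : Euc n → Euc n}
    (hfg : ProperGradientHomotopic f g) : ProperGradientHomotopic (-f) (-g) := by
  obtain ⟨h, ⟨hcont, hgrad, hprop⟩, rfl, rfl⟩ := hfg
  refine ⟨fun t => -h t, ⟨hcont.neg, fun t ht => (hgrad t ht).neg, fun K hK => ?_⟩, rfl, rfl⟩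
  exact hprop (-K) hK.neg

theorem IsProper.neg {f : Euc n → Euc n} (hf : IsProper f) : IsProper (-f) :=
  fun K hK => hf (-K) hK.neg

def concatHomotopy (h₁ h₂ : ℝ → Euc n → Euc n) (t : ℝ) : Euc n → Euc n :=
  if t ≤ 1 / 2 then h₁ (2 * t) else h₂ (2 * t - 1)

variable {h₁ h₂ : ℝ → Euc n → Euc n}

theorem concatHomotopy_of_le {t : ℝ} (ht : t ≤ 1 / 2) : concatHomotopy h₁ h₂ t = h₁ (2 * t) :=
  if_pos ht

theorem concatHomotopy_of_gt {t : ℝ} (ht : 1 / 2 < t) :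
    concatHomotopy h₁ h₂ t = h₂ (2 * t - 1) :=
  if_neg (not_le.mpr ht)

theorem continuousOn_concatHomotopy
    (hcont₁ : ContinuousOn (fun q : ℝ × Euc n => h₁ q.1 q.2) (Icc 0 1 ×ˢ univ))
    (hcont₂ : ContinuousOn (fun q : ℝ × Euc n => h₂ q.1 q.2) (Icc 0 1 ×ˢ univ))
    (hglue : h₂ 0 = h₁ 1) :
    ContinuousOn (fun q : ℝ × Euc n => concatHomotopy h₁ h₂ q.1 q.2) (Icc 0 1 ×ˢ univ) := by
  have hsplit : Icc (0 : ℝ) 1 = Icc 0 (1 / 2) ∪ Icc (1 / 2) 1 :=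
    (Icc_union_Icc_eq_Icc (by norm_num) (by norm_num)).symm
  rw [hsplit, union_prod]
  refine ContinuousOn.union_of_isClosed ?_ ?_ (isClosed_Icc.prod isClosed_univ)
    (isClosed_Icc.prod isClosed_univ)
  · have hdouble : Continuous fun q : ℝ × Euc n => (2 * q.1, q.2) := by fun_prop
    refine (hcont₁.comp hdouble.continuousOn fun q hq =>
      ⟨⟨by linarith [hq.1.1], by linarith [hq.1.2]⟩, trivial⟩).congr fun q hq => ?_
    simp only [Function.comp_apply, concatHomotopy_of_le hq.1.2]
  · have hdouble : Continuous fun q : ℝ × Euc n => (2 * q.1 - 1, q.2) := by fun_prop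
    refine (hcont₂.comp hdouble.continuousOn fun q hq =>
      ⟨⟨by linarith [hq.1.1], by linarith [hq.1.2]⟩, trivial⟩).congr fun q hq => ?_
    rcases hq.1.1.eq_or_lt with hq' | hq'
    · rw [Function.comp_apply, ← hq', concatHomotopy_of_le le_rfl]
      norm_num [hglue]
    · simp only [Function.comp_apply, concatHomotopy_of_gt hq']

theorem ProperGradientHomotopic.trans {f g k : Euc n → Euc n}
    (hfg : ProperGradientHomotopic f g) (hgk : ProperGradientHomotopic g k) :
    ProperGradientHomotopic f k := by
  obtain ⟨h₁, ⟨hcont₁, hgrad₁, hprop₁⟩, rfl, rfl⟩ := hfg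
  obtain ⟨h₂, ⟨hcont₂, hgrad₂, hprop₂⟩, hglue, rfl⟩ := hgk
  have hcont := continuousOn_concatHomotopy hcont₁ hcont₂ hglue
  refine ⟨concatHomotopy h₁ h₂, ⟨hcont, fun t ht => ?_, fun K hK => ?_⟩, ?_, ?_⟩
  · rcases le_or_gt t (1 / 2) with ht' | ht'
    · rw [concatHomotopy_of_le ht']
      exact hgrad₁ (2 * t) ⟨by linarith [ht.1], by linarith⟩
    · rw [concatHomotopy_of_gt ht']
      exact hgrad₂ (2 * t - 1) ⟨by linarith, by linarith [ht.2]⟩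
  · have hhalve₁ : Continuous fun q : ℝ × Euc n => (q.1 / 2, q.2) := by fun_prop
    have hhalve₂ : Continuous fun q : ℝ × Euc n => ((q.1 + 1) / 2, q.2) := by fun_prop
    refine ((hprop₁ K hK).image hhalve₁).union ((hprop₂ K hK).image hhalve₂)
      |>.of_isClosed_subset (isClosed_setOf_mem_Icc_and_mem hcont hK.isClosed) ?_
    rintro ⟨t, x⟩ ⟨ht, hx⟩
    rcases le_or_gt t (1 / 2) with ht' | ht'
    · rw [concatHomotopy_of_le ht'] at hx
      exact Or.inl ⟨(2 * t, x), ⟨⟨by linarith [ht.1], by linarith⟩, hx⟩, by simp⟩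
    · rw [concatHomotopy_of_gt ht'] at hx
      exact Or.inr ⟨(2 * t - 1, x), ⟨⟨by linarith, by linarith [ht.2]⟩, hx⟩, by simp⟩
  · rw [concatHomotopy_of_le (by norm_num), mul_zero]
  · rw [concatHomotopy_of_gt (by norm_num)]
    norm_num

end ProperGradientHomotopies

section Linearisation

variable {n : ℕ}

theorem isGradient_blowUp {φ : Euc n → ℝ} {p : Euc n} (hφ : ContDiff ℝ 2 φ) (hp : ∇ φ p = 0)
    (s : ℝ) : IsGradient (blowUp (∇ φ) (fderiv ℝ (∇ φ) p) p s) := by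
  rcases eq_or_ne s 0 with rfl | hs
  · rw [blowUp_zero]
    exact isGradient_comp_sub (isSymmetric_fderiv_gradient hφ p) p
  · have hblowUp :
        blowUp (∇ φ) (fderiv ℝ (∇ φ) p) p s = fun x => s⁻¹ • ∇ φ (p + s • (x - p)) :=
      funext fun x => by rw [blowUp_of_ne_zero hs, hp, sub_zero]
    rw [hblowUp]
    exact isGradient_inv_smul_gradient_comp (hφ.of_le one_le_two) p s

theorem properGradientHomotopic_fderiv_comp_sub {φ : Euc n → ℝ} {p : Euc n} {C : ℝ}
    (hφ : ContDiff ℝ 2 φ) (hprop : IsProper (∇ φ)) (hzero : ∇ φ ⁻¹' {0} = {p})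
    (hC : ∀ v, ‖v‖ ≤ C * ‖fderiv ℝ (∇ φ) p v‖) :
    ProperGradientHomotopic (∇ φ) fun x => fderiv ℝ (∇ φ) p (x - p) := by
  have hp : ∇ φ p = 0 := by simpa using hzero.ge rfl
  have hf : ContDiff ℝ 1 (∇ φ) := contDiff_gradient hφ
  have hA := ((hf.differentiable one_ne_zero) p).hasFDerivAt
  refine ⟨fun t => blowUp (∇ φ) (fderiv ℝ (∇ φ) p) p (1 - t),
    isProperGradientHomotopy_of_bound ?_ (fun t _ => isGradient_blowUp hφ hp (1 - t)) ?_, ?_, ?_⟩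
  · exact ((continuous_blowUp hf.continuous hA).comp
      (by fun_prop : Continuous fun q : ℝ × Euc n => (1 - q.1, q.2))).continuousOn
  · intro M
    obtain ⟨K, hK0, hK⟩ :=
      exists_norm_sub_le_mul_norm hf.continuous hA hC hzero (hprop _ (isCompact_closedBall 0 M))
    refine ⟨max K C * M + ‖p‖, fun t ht x hx => ?_⟩
    have hs : 1 - t ∈ Icc (0 : ℝ) 1 := ⟨by linarith [ht.2], by linarith [ht.1]⟩
    have hK' : ∀ y, ‖∇ φ y‖ ≤ M → ‖y - p‖ ≤ K * ‖∇ φ y‖ :=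
      fun y hy => hK y (by simpa using hy)
    calc ‖x‖ ≤ ‖x - p‖ + ‖p‖ := norm_le_norm_sub_add x p
      _ ≤ max K C * M + ‖p‖ := by
        gcongr
        exact norm_sub_le_of_norm_blowUp_le hp hK' hK0 hC hs hx
  · ext1 x
    dsimp only
    rw [sub_zero, blowUp_of_ne_zero one_ne_zero, hp]
    simp
  · simp

theorem properGradientHomotopic_comp_sub_id {A : Euc n →L[ℝ] Euc n} {c : ℝ}
    (hA : (A : Euc n →ₗ[ℝ] Euc n).IsSymmetric) (hc : 0 < c)
    (hcoer : ∀ v, c * ‖v‖ ^ 2 ≤ ⟪A v, v⟫) (p : Euc n) :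
    ProperGradientHomotopic (fun x => A (x - p)) id := by
  set B : ℝ → Euc n →L[ℝ] Euc n :=
    fun t => (1 - t) • A + t • ContinuousLinearMap.id ℝ (Euc n)
  have hB (t : ℝ) (x : Euc n) : B t x = (1 - t) • A x + t • x := rfl
  have hA' : ∀ u v, ⟪A u, v⟫ = ⟪u, A v⟫ := hA
  have hBsymm (t : ℝ) : (B t : Euc n →ₗ[ℝ] Euc n).IsSymmetric := fun u v => by
    simp only [ContinuousLinearMap.coe_coe, hB, inner_add_left, inner_add_right,
      real_inner_smul_left, real_inner_smul_right, hA']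
  have hBcoer {t : ℝ} (ht : t ∈ Icc (0 : ℝ) 1) (v : Euc n) :
      min c 1 * ‖v‖ ^ 2 ≤ ⟪B t v, v⟫ := by
    have ht' : 0 ≤ 1 - t := by linarith [ht.2]
    calc min c 1 * ‖v‖ ^ 2 = (1 - t) * (min c 1 * ‖v‖ ^ 2) + t * (min c 1 * ‖v‖ ^ 2) := by
          ring
      _ ≤ (1 - t) * ⟪A v, v⟫ + t * ‖v‖ ^ 2 := by
        gcongr
        · exact (mul_le_mul_of_nonneg_right (min_le_left _ _) (sq_nonneg _)).trans (hcoer v)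
        · exact ht.1
        · exact mul_le_of_le_one_left (sq_nonneg _) (min_le_right _ _)
      _ = ⟪B t v, v⟫ := by
        rw [hB, inner_add_left, real_inner_smul_left, real_inner_smul_left,
          real_inner_self_eq_norm_sq]
  refine ⟨fun t x => B t (x - (1 - t) • p), isProperGradientHomotopy_of_bound ?_
    (fun t _ => isGradient_comp_sub (hBsymm t) ((1 - t) • p)) fun M => ?_, ?_, ?_⟩
  · simp only [hB]
    fun_prop
  · refine ⟨M / min c 1 + ‖p‖, fun t ht x hx => ?_⟩
    have hmin : 0 < min c 1 := lt_min hc one_pos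
    have hx' : ‖x - (1 - t) • p‖ ≤ M / min c 1 := by
      rw [le_div_iff₀' hmin]
      exact (mul_norm_le_norm_of_mul_sq_norm_le_inner (hBcoer ht) _).trans hx
    have hp : ‖(1 - t) • p‖ ≤ ‖p‖ := by
      rw [norm_smul, Real.norm_eq_abs, abs_of_nonneg (by linarith [ht.2])]
      exact mul_le_of_le_one_left (norm_nonneg _) (by linarith [ht.1])
    calc ‖x‖ ≤ ‖x - (1 - t) • p‖ + ‖(1 - t) • p‖ := norm_le_norm_sub_add x _
      _ ≤ M / min c 1 + ‖p‖ := add_le_add hx' hp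
  · ext1 x
    simp [hB]
  · ext1 x
    simp [hB]

end Linearisation

theorem IsSinkAt.neg {f : Euc 2 → Euc 2} {p : Euc 2} (h : IsSinkAt f p) : IsSourceAt (-f) p :=
  ⟨by simp [h.1], fun v hv => by simpa [fderiv_neg] using h.2 v hv⟩

theorem properGradientHomotopic_id_of_isSourceAt {φ : Euc 2 → ℝ} {p : Euc 2}
    (hφ : ContDiff ℝ 2 φ) (hprop : IsProper (∇ φ)) (hzero : ∇ φ ⁻¹' {0} = {p})
    (hsrc : IsSourceAt (∇ φ) p) : ProperGradientHomotopic (∇ φ) id := by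
  obtain ⟨c, hc, hcoer⟩ := exists_pos_mul_sq_norm_le_inner hsrc.2
  have hC (v : Euc 2) : ‖v‖ ≤ c⁻¹ * ‖fderiv ℝ (∇ φ) p v‖ := by
    rw [← div_eq_inv_mul, le_div_iff₀' hc]
    exact mul_norm_le_norm_of_mul_sq_norm_le_inner hcoer v
  exact (properGradientHomotopic_fderiv_comp_sub hφ hprop hzero hC).trans
    (properGradientHomotopic_comp_sub_id (isSymmetric_fderiv_gradient hφ p) hc hcoer p)

/-- if `f = ∇φ` is a generic proper gradient map on `ℝ²` whose zero set is the
single point `p`, then `f` is proper gradient homotopic to `id` if `p` is a source, and to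
`-id` if `p` is a sink. -/
theorem generic_single_zero_homotopic_id_or_neg (φ : Euc 2 → ℝ) (f : Euc 2 → Euc 2)
    (hgen : IsGenericGradientPair φ f) (hprop : IsProper f) (p : Euc 2)
    (hzero : f ⁻¹' {0} = {p}) :
    (IsSourceAt f p → ProperGradientHomotopic f (id : Euc 2 → Euc 2)) ∧
    (IsSinkAt f p → ProperGradientHomotopic f (fun x : Euc 2 => -x)) := by
  obtain ⟨hφ, hgrad, -⟩ := hgen
  obtain rfl : ∇ φ = f := funext hgrad
  refine ⟨properGradientHomotopic_id_of_isSourceAt hφ hprop hzero, fun hsink => ?_⟩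
  have hzero' : ∇ (-φ) ⁻¹' {0} = {p} := by
    rw [← hzero, gradient_neg]
    ext x
    simp
  have hsource := properGradientHomotopic_id_of_isSourceAt (φ := -φ) hφ.neg
    (gradient_neg φ ▸ hprop.neg) hzero' (gradient_neg φ ▸ hsink.neg)
  have hsink' := hsource.neg
  rw [gradient_neg, neg_neg] at hsink'
  exact hsink'
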